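/- Let X = orbit closure of x with x not eventually periodic to the right, suppose c_X(n_k) < 2g·n_k and X has exactly C right-special words of length n_k for each term of a strictly increasing sequence (n_k). Then every word of X of length (2g+1)n_k contains at least one right-special word of length n_k, and every generic measure of X equals a weak limit of empirical measures (1/n_k)Σ_{j=0}^{n_k−1} δ_{σ^j y_k} along points y_k beginning with one of the C right-special words of length n_k; in particular X has at most C generic measures. -/

import Mathlib

/-!
If a factor `v` of length `n` of `x` is not right-special, every occurrence of `v` is followed by
the same letter. Hence if positions `i < j` carry the same factor of length `n` and no position in
`[i, j)` carries a right-special one, `x` is periodic with period `j - i` from `i` on. A window of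
length `c(n) + n` has `c(n) + 1` factors of length `n`, so two of them coincide and, `x` not being
eventually periodic, the window contains a right-special factor; as `c(n_k) < 2g n_k`, it starts at
some `q_k ≤ 2g n_k`. For a generic point of `μ` the averages along `[q_k, q_k + n_k)` still converge
to `μ`, because `q_k / n_k` stays bounded. Orbit segments agreeing on `[0, n)` have Birkhoff
averages that differ by `o(1)` for continuous `f`; so among `C + 1` generic measures, pigeonhole on
the `C` right-special words gives two whose windows start with the same word for infinitely many
`k`, and these two measures coincide.
-/


open Filter Topology MeasureTheory

variable {A : Type*} {B : Type*}

/-- The shift by `m` on bi-infinite sequences. -/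
def shiftBy (m : ℤ) (x : ℤ → A) : ℤ → A := fun i => x (i + m)

/-- The orbit closure of a point. -/
def orbitClosure [TopologicalSpace A] (x : ℤ → A) : Set (ℤ → A) :=
  closure {y | ∃ m : ℤ, y = shiftBy m x}

/-- A set of sequences invariant under all shifts. -/
def ShiftInvariant (X : Set (ℤ → A)) : Prop := ∀ m : ℤ, ∀ y ∈ X, shiftBy m y ∈ X

/-- A subshift: closed and shift-invariant. -/
def IsSubshift [TopologicalSpace A] (X : Set (ℤ → A)) : Prop :=
  IsClosed X ∧ ShiftInvariant X

/-- The word `w` occurs in `x` at position `i`. -/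
def occursAt (x : ℤ → A) (w : List A) (i : ℤ) : Prop :=
  ∀ k : Fin w.length, x (i + (k.val : ℤ)) = w.get k

/-- The word `w` occurs somewhere in some point of `X`. -/
def WordIn (X : Set (ℤ → A)) (w : List A) : Prop :=
  ∃ x ∈ X, ∃ i : ℤ, occursAt x w i

/-- The language of `X` in length `n`. -/
def langOf (X : Set (ℤ → A)) (n : ℕ) : Set (List A) :=
  {w | w.length = n ∧ WordIn X w}

/-- The complexity function of `X`. -/
noncomputable def complexity (X : Set (ℤ → A)) (n : ℕ) : ℕ := (langOf X n).ncard

/-- `w` is right-special in `X`. -/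
def RightSpecial (X : Set (ℤ → A)) (w : List A) : Prop :=
  ∃ a b : A, a ≠ b ∧ WordIn X (w ++ [a]) ∧ WordIn X (w ++ [b])

/-- `w` is left-special in `X`. -/
def LeftSpecial (X : Set (ℤ → A)) (w : List A) : Prop :=
  ∃ a b : A, a ≠ b ∧ WordIn X (a :: w) ∧ WordIn X (b :: w)

/-- The set of right-special words of length `n`. -/
def RS (X : Set (ℤ → A)) (n : ℕ) : Set (List A) :=
  {w | w.length = n ∧ RightSpecial X w}

/-- The length-`ℓ` word of `x` starting at position `i`. -/
def wordAt (x : ℤ → A) (i : ℤ) (ℓ : ℕ) : List A :=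
  List.ofFn (fun t : Fin ℓ => x (i + (t.val : ℤ)))

/-- `x` is a recurrent point: every word in it occurs infinitely often. -/
def RecurrentPt (x : ℤ → A) : Prop :=
  ∀ n : ℕ, ∀ i N : ℤ, ∃ j : ℤ, N ≤ j ∧ ∀ k : ℕ, k < n → x (j + k) = x (i + k)

/-- `x` is eventually periodic to the right. -/
def EventuallyPeriodicRight (x : ℤ → A) : Prop :=
  ∃ p : ℤ, 0 < p ∧ ∃ N : ℤ, ∀ i : ℤ, N < i → x (i + p) = x i

/-- `x` is eventually periodic to the left. -/
def EventuallyPeriodicLeft (x : ℤ → A) : Prop :=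
  ∃ p : ℤ, 0 < p ∧ ∃ N : ℤ, ∀ i : ℤ, i < N → x (i - p) = x i

/-- `M` is a minimal subsystem of `X`. -/
def MinimalSubsystem [TopologicalSpace A] (X M : Set (ℤ → A)) : Prop :=
  M ⊆ X ∧ M.Nonempty ∧ IsClosed M ∧ ShiftInvariant M ∧
    ∀ M' ⊆ M, M'.Nonempty → IsClosed M' → ShiftInvariant M' → M' = M

/-- `x` is a generic point for the measure `μ`. -/
def GenericFor [TopologicalSpace A] [MeasurableSpace A] (x : ℤ → A)
    (μ : Measure (ℤ → A)) : Prop :=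
  ∀ f : (ℤ → A) → ℝ, Continuous f →
    Tendsto (fun N : ℕ => (∑ i ∈ Finset.range N, f (shiftBy i x)) / (N : ℝ)) atTop
      (𝓝 (∫ y, f y ∂μ))

/-- `μ` is a generic measure for `X`. -/
def GenericMeasure [TopologicalSpace A] [MeasurableSpace A] (X : Set (ℤ → A))
    (μ : Measure (ℤ → A)) : Prop :=
  ∃ x ∈ X, GenericFor x μ

lemma shiftBy_shiftBy (a b : ℤ) (x : ℤ → A) : shiftBy a (shiftBy b x) = shiftBy (b + a) x := by
  funext i
  exact congrArg x (by ring)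

lemma continuous_shiftBy [TopologicalSpace A] (m : ℤ) :
    Continuous (shiftBy m : (ℤ → A) → ℤ → A) :=
  continuous_pi fun i => continuous_apply (i + m)

lemma mem_orbitClosure_self [TopologicalSpace A] (x : ℤ → A) : x ∈ orbitClosure x :=
  subset_closure ⟨0, funext fun i => by simp [shiftBy]⟩

lemma shiftInvariant_orbitClosure [TopologicalSpace A] (x : ℤ → A) :
    ShiftInvariant (orbitClosure x) := fun m _ hy =>
  map_mem_closure (continuous_shiftBy m) hy fun _ ⟨k, hk⟩ => ⟨k + m, by rw [hk, shiftBy_shiftBy]⟩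

lemma length_wordAt (x : ℤ → A) (i : ℤ) (n : ℕ) : (wordAt x i n).length = n :=
  List.length_ofFn

lemma wordAt_eq_iff {x y : ℤ → A} {a b : ℤ} {n : ℕ} :
    wordAt x a n = wordAt y b n ↔ ∀ t : Fin n, x (a + t) = y (b + t) := by
  rw [wordAt, wordAt, List.ofFn_inj, funext_iff]

lemma wordAt_shiftBy (m : ℤ) (x : ℤ → A) (i : ℤ) (n : ℕ) :
    wordAt (shiftBy m x) i n = wordAt x (i + m) n := by
  simp only [wordAt, shiftBy, add_right_comm]

lemma wordAt_succ (x : ℤ → A) (i : ℤ) (n : ℕ) :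
    wordAt x i (n + 1) = x i :: wordAt x (i + 1) n := by
  simp only [wordAt, List.ofFn_succ, Fin.val_zero, Nat.cast_zero, add_zero, Fin.val_succ,
    Nat.cast_add, Nat.cast_one, add_assoc, add_comm (1 : ℤ)]

lemma wordAt_succ' (x : ℤ → A) (i : ℤ) (n : ℕ) :
    wordAt x i (n + 1) = wordAt x i n ++ [x (i + n)] := by
  simp only [wordAt, List.ofFn_succ', List.concat_eq_append, Fin.val_castSucc, Fin.val_last]

lemma occursAt_wordAt (x : ℤ → A) (i : ℤ) (n : ℕ) : occursAt x (wordAt x i n) i := fun k => by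
  rw [List.get_eq_getElem]
  simp [wordAt]

lemma wordIn_wordAt {X : Set (ℤ → A)} {x : ℤ → A} (hx : x ∈ X) (i : ℤ) (n : ℕ) :
    WordIn X (wordAt x i n) :=
  ⟨x, hx, i, occursAt_wordAt x i n⟩

lemma occursAt_shiftBy_iff {m : ℤ} {x : ℤ → A} {w : List A} {i : ℤ} :
    occursAt (shiftBy m x) w i ↔ occursAt x w (i + m) := by
  simp only [occursAt, shiftBy, add_right_comm]

lemma isOpen_setOf_occursAt [TopologicalSpace A] [DiscreteTopology A] (w : List A) (i : ℤ) :
    IsOpen {z : ℤ → A | occursAt z w i} := by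
  simp only [occursAt, Set.ofPred_forall]
  exact isOpen_iInter_of_finite fun k =>
    (isOpen_discrete {w.get k}).preimage
      (continuous_apply (i + (k : ℕ)) : Continuous fun z : ℤ → A => z (i + (k : ℕ)))

lemma wordIn_orbitClosure_iff [TopologicalSpace A] [DiscreteTopology A] {x : ℤ → A}
    {w : List A} : WordIn (orbitClosure x) w ↔ ∃ j, occursAt x w j := by
  constructor
  · rintro ⟨y, hy, i, hocc⟩
    obtain ⟨-, hz, m, rfl⟩ := mem_closure_iff.mp hy _ (isOpen_setOf_occursAt w i) hocc
    exact ⟨i + m, occursAt_shiftBy_iff.mp hz⟩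
  · rintro ⟨j, hj⟩
    exact ⟨x, mem_orbitClosure_self x, j, hj⟩

lemma drop_take_eq_wordAt {x : ℤ → A} {w : List A} {q : ℤ} (h : occursAt x w q) {i n : ℕ}
    (hin : i + n ≤ w.length) : (w.drop i).take n = wordAt x (q + i) n := by
  apply List.ext_getElem
  · simp only [List.length_take, List.length_drop, length_wordAt]
    omega
  · intro t h₁ _
    have hocc := h ⟨i + t, by simp only [List.length_take, List.length_drop] at h₁; omega⟩
    simp only [List.get_eq_getElem] at hocc
    simp only [List.getElem_take, List.getElem_drop, wordAt, List.getElem_ofFn, ← hocc]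
    push_cast
    ring_nf

lemma wordAt_add_one_eq_of_not_rightSpecial {X : Set (ℤ → A)} {x : ℤ → A} (hx : x ∈ X)
    {p p' : ℤ} {n : ℕ} (hp : ¬ RightSpecial X (wordAt x p n))
    (heq : wordAt x p n = wordAt x p' n) : wordAt x (p + 1) n = wordAt x (p' + 1) n := by
  have hnext : x (p + n) = x (p' + n) := by
    by_contra hne
    refine hp ⟨_, _, hne, ?_, ?_⟩
    · rw [← wordAt_succ']
      exact wordIn_wordAt hx p (n + 1)
    · rw [heq, ← wordAt_succ']
      exact wordIn_wordAt hx p' (n + 1)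
  have hlong : wordAt x p (n + 1) = wordAt x p' (n + 1) := by
    rw [wordAt_succ', wordAt_succ', heq, hnext]
  rw [wordAt_succ, wordAt_succ] at hlong
  exact (List.cons.inj hlong).2

lemma periodic_of_step_determined {β : Type*} {u : ℕ → β} {S : Set β} {d : ℕ} (hd : 0 < d)
    (hS : ∀ t < d, u t ∈ S) (h0 : u d = u 0)
    (hstep : ∀ s t, u s ∈ S → u s = u t → u (s + 1) = u (t + 1)) : Function.Periodic u d := by
  have key : ∀ t, u t ∈ S ∧ u (t + d) = u t := by
    intro t
    induction t using Nat.strong_induction_on with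
    | _ t ih =>
      have hmem : u t ∈ S := by
        rcases lt_or_ge t d with htd | htd
        · exact hS t htd
        · obtain ⟨hS', hper⟩ := ih (t - d) (by omega)
          rw [Nat.sub_add_cancel htd] at hper
          rwa [hper]
      refine ⟨hmem, ?_⟩
      rcases t with _ | t
      · simpa using h0
      · obtain ⟨hS', hper⟩ := ih t (by omega)
        rw [Nat.add_right_comm]
        exact hstep _ _ (by rwa [hper]) hper
  exact fun t => (key t).2

lemma eventuallyPeriodicRight_of_wordAt_eq {X : Set (ℤ → A)} {x : ℤ → A} (hx : x ∈ X) {n : ℕ}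
    (hn : 0 < n) {i : ℤ} {d : ℕ} (hd : 0 < d) (heq : wordAt x (i + d) n = wordAt x i n)
    (hRS : ∀ t < d, ¬ RightSpecial X (wordAt x (i + t) n)) : EventuallyPeriodicRight x := by
  have hper : Function.Periodic (fun t : ℕ => wordAt x (i + t) n) d :=
    periodic_of_step_determined (S := {w | ¬ RightSpecial X w}) hd hRS (by simpa using heq)
      fun s t hs hst => by
        simpa only [Nat.cast_succ, add_assoc] using wordAt_add_one_eq_of_not_rightSpecial hx hs hst
  refine ⟨d, by exact_mod_cast hd, i, fun m hm => ?_⟩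
  obtain ⟨t, rfl⟩ : ∃ t : ℕ, m = i + t := ⟨(m - i).toNat, by omega⟩
  have := wordAt_eq_iff.mp (hper t) ⟨0, hn⟩
  simpa [add_comm (t : ℤ), add_assoc] using this

theorem exists_rightSpecial_factor [Finite A] [TopologicalSpace A] [DiscreteTopology A]
    {x : ℤ → A} (hnp : ¬ EventuallyPeriodicRight x) {n : ℕ} (hn : 0 < n) {w : List A}
    (hw : WordIn (orbitClosure x) w) (hlen : complexity (orbitClosure x) n + n ≤ w.length) :
    ∃ i : ℕ, i + n ≤ w.length ∧ (w.drop i).take n ∈ RS (orbitClosure x) n := by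
  obtain ⟨q, hq⟩ := wordIn_orbitClosure_iff.mp hw
  by_contra! hnone
  have hnotRS : ∀ r : ℕ, r + n ≤ w.length →
      ¬ RightSpecial (orbitClosure x) (wordAt x (q + r) n) := fun r hr hRS =>
    hnone r hr (by rw [drop_take_eq_wordAt hq hr]; exact ⟨length_wordAt .., hRS⟩)
  -- `complexity + 1` positions, so two of them carry the same factor of length `n`
  obtain ⟨a, ha, b, hb, hab, heq⟩ := Set.exists_ne_map_eq_of_ncard_lt_of_maps_to
    (s := ↑(Finset.Iic (complexity (orbitClosure x) n)))
    (t := langOf (orbitClosure x) n) (f := fun r : ℕ => wordAt x (q + r) n)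
    (by rw [Set.ncard_coe_finset, Nat.card_Iic, complexity]; omega)
    (fun r _ => ⟨length_wordAt .., wordIn_wordAt (mem_orbitClosure_self x) _ _⟩)
    ((List.finite_length_eq A n).subset fun _ hv => hv.1)
  simp only [Finset.coe_Iic, Set.mem_Iic] at ha hb
  wlog hlt : a < b generalizing a b
  · exact this b a hab.symm heq.symm hb ha (by omega)
  refine hnp (eventuallyPeriodicRight_of_wordAt_eq (mem_orbitClosure_self x) hn
    (i := q + a) (d := b - a) (by omega) ?_ fun t ht => ?_)
  · rw [heq]; push_cast [hlt.le]; ring_nf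
  · simpa [add_assoc] using hnotRS (a + t) (by omega)

lemma tendsto_of_forall_eventually_abs_sub_le {ι : Type*} {l : Filter ι} {u b : ι → ℝ} {L : ℝ}
    (hb : Tendsto b l atTop) (h : ∀ ε > 0, ∃ B, ∀ᶠ i in l, |u i - L| ≤ ε + B / b i) :
    Tendsto u l (𝓝 L) := by
  rw [Metric.tendsto_nhds]
  intro δ hδ
  obtain ⟨B, hB⟩ := h (δ / 2) (half_pos hδ)
  have hsmall : ∀ᶠ i in l, B / b i < δ / 2 :=
    (tendsto_const_nhds.div_atTop hb).eventually (gt_mem_nhds (half_pos hδ))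
  filter_upwards [hB, hsmall] with i h₁ h₂
  rw [Real.dist_eq]
  linarith

lemma exists_abs_sub_mul_le {F : ℕ → ℝ} {I : ℝ} (hF : Tendsto (fun N : ℕ => F N / N) atTop (𝓝 I))
    {ε : ℝ} (hε : 0 < ε) : ∃ B, ∀ N : ℕ, |F N - N * I| ≤ ε * N + B := by
  obtain ⟨K, hK⟩ := eventually_atTop.mp
    ((hF.eventually (Metric.closedBall_mem_nhds I hε)).and (eventually_gt_atTop 0))
  refine ⟨∑ N ∈ Finset.range K, |F N - N * I|, fun N => ?_⟩
  have hB : 0 ≤ ∑ N ∈ Finset.range K, |F N - N * I| :=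
    Finset.sum_nonneg fun _ _ => abs_nonneg _
  rcases lt_or_ge N K with hN | hN
  · have := Finset.single_le_sum (f := fun N : ℕ => |F N - N * I|) (fun _ _ => abs_nonneg _)
      (Finset.mem_range.mpr hN)
    have : 0 ≤ ε * N := by positivity
    linarith
  · obtain ⟨hclose, hpos⟩ := hK N hN
    have hNpos : (0 : ℝ) < N := by exact_mod_cast hpos
    rw [Real.dist_eq] at hclose
    have : |F N - N * I| = N * |F N / N - I| := by
      rw [← abs_of_pos hNpos, ← abs_mul, abs_of_pos hNpos]
      congr 1
      field_simp
    rw [this]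
    nlinarith

lemma tendsto_sub_div_of_tendsto_div {F : ℕ → ℝ} {I : ℝ}
    (hF : Tendsto (fun N : ℕ => F N / N) atTop (𝓝 I)) {a b : ℕ → ℕ} {c : ℕ}
    (hab : ∀ m, a m ≤ c * b m) (hb : Tendsto b atTop atTop) :
    Tendsto (fun m => (F (a m + b m) - F (a m)) / b m) atTop (𝓝 I) := by
  refine tendsto_of_forall_eventually_abs_sub_le (tendsto_natCast_atTop_iff.mpr hb)
    fun ε hε => ?_
  obtain ⟨B, hB⟩ := exists_abs_sub_mul_le hF (ε := ε / (2 * c + 1)) (by positivity)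
  refine ⟨2 * B, ?_⟩
  filter_upwards [hb.eventually_gt_atTop 0] with m hm
  have hbpos : (0 : ℝ) < b m := by exact_mod_cast hm
  have hab' : (a m : ℝ) ≤ c * b m := by exact_mod_cast hab m
  have h₁ := hB (a m + b m)
  have h₂ := hB (a m)
  push_cast at h₁
  have hε' : ε / (2 * c + 1) * (a m + b m) + ε / (2 * c + 1) * a m ≤ ε * b m := by
    rw [← mul_add, div_mul_eq_mul_div, div_le_iff₀ (by positivity)]
    nlinarith
  have hnum : |F (a m + b m) - F (a m) - b m * I| ≤ ε * b m + 2 * B :=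
    calc |F (a m + b m) - F (a m) - b m * I|
        = |(F (a m + b m) - (a m + b m) * I) - (F (a m) - a m * I)| := by ring_nf
      _ ≤ |F (a m + b m) - (a m + b m) * I| + |F (a m) - a m * I| := abs_sub _ _
      _ ≤ ε * b m + 2 * B := by linarith
  rw [show (F (a m + b m) - F (a m)) / b m - I = (F (a m + b m) - F (a m) - b m * I) / b m by
      field_simp, abs_div, abs_of_pos hbpos, div_le_iff₀ hbpos,
    show (ε + 2 * B / b m) * b m = ε * b m + 2 * B by field_simp]
  exact hnum

def shiftSum (f : (ℤ → A) → ℝ) (N : ℕ) (y : ℤ → A) : ℝ :=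
  ∑ i ∈ Finset.range N, f (shiftBy i y)

lemma shiftSum_add (f : (ℤ → A) → ℝ) (a b : ℕ) (y : ℤ → A) :
    shiftSum f (a + b) y = shiftSum f a y + shiftSum f b (shiftBy a y) := by
  simp only [shiftSum, Finset.sum_range_add, shiftBy_shiftBy, Nat.cast_add]

lemma exists_abs_sub_le_of_eqOn_window [Finite A] [TopologicalSpace A] [DiscreteTopology A]
    {f : (ℤ → A) → ℝ} (hf : Continuous f) {ε : ℝ} (hε : 0 < ε) :
    ∃ M : ℕ, ∀ u v : ℤ → A, (∀ c : ℤ, c.natAbs ≤ M → u c = v c) → |f u - f v| ≤ ε := by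
  have hcyl : ∀ u : ℤ → A, ∃ J : Finset ℤ,
      ∀ v : ℤ → A, (∀ c ∈ J, v c = u c) → |f v - f u| < ε / 2 := by
    intro u
    have hO : f ⁻¹' Metric.ball (f u) (ε / 2) ∈ 𝓝 u :=
      hf.continuousAt.preimage_mem_nhds (Metric.ball_mem_nhds _ (half_pos hε))
    rw [nhds_pi, Filter.mem_pi] at hO
    obtain ⟨I, hI, t, ht, hsub⟩ := hO
    refine ⟨hI.toFinset, fun v hv => ?_⟩
    have hvt : v ∈ Set.pi I t := fun c hc => by
      rw [hv c (hI.mem_toFinset.mpr hc)]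
      exact mem_of_mem_nhds (ht c)
    simpa [Real.dist_eq] using hsub hvt
  choose J hJ using hcyl
  have hopen : ∀ u : ℤ → A, IsOpen {v : ℤ → A | ∀ c ∈ J u, v c = u c} := fun u => by
    simp only [Set.ofPred_forall]
    exact isOpen_biInter_finset fun c _ =>
      (isOpen_discrete {u c}).preimage (continuous_apply c : Continuous fun v : ℤ → A => v c)
  obtain ⟨T, hT⟩ := isCompact_univ.elim_finite_subcover _ hopen
    fun u _ => Set.mem_iUnion.mpr ⟨u, fun _ _ => rfl⟩
  refine ⟨T.sup fun w => (J w).sup Int.natAbs, fun u v huv => ?_⟩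
  obtain ⟨w, hwT, hw⟩ := Set.mem_iUnion₂.mp (hT (Set.mem_univ u))
  have hvw : ∀ c ∈ J w, v c = w c := fun c hc => by
    rw [← huv c <|
      (Finset.le_sup hc).trans (Finset.le_sup (f := fun w => (J w).sup Int.natAbs) hwT)]
    exact hw c hc
  have hu := abs_lt.mp (hJ w u hw)
  have hv := abs_lt.mp (hJ w v hvw)
  rw [abs_le]
  constructor <;> linarith

lemma card_filter_not_mem_window_le (M N : ℕ) :
    ((Finset.range N).filter fun j => ¬ (M ≤ j ∧ j + M < N)).card ≤ 2 * M :=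
  calc _ ≤ (Finset.range M ∪ Finset.Ico (N - M) N).card := Finset.card_le_card fun j hj => by
          simp only [Finset.mem_filter, Finset.mem_range, Finset.mem_union,
            Finset.mem_Ico] at hj ⊢
          omega
    _ ≤ 2 * M := (Finset.card_union_le _ _).trans <| by
          rw [Finset.card_range, Nat.card_Ico]
          omega

lemma abs_shiftSum_sub_le {f : (ℤ → A) → ℝ} {ε K : ℝ} {M : ℕ}
    (hM : ∀ u v : ℤ → A, (∀ c : ℤ, c.natAbs ≤ M → u c = v c) → |f u - f v| ≤ ε)
    (hK : ∀ u, |f u| ≤ K) {y₁ y₂ : ℤ → A} {N : ℕ} (hy : wordAt y₁ 0 N = wordAt y₂ 0 N) :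
    |shiftSum f N y₁ - shiftSum f N y₂| ≤ N * ε + 4 * M * K := by
  have hε : 0 ≤ ε := (abs_nonneg _).trans (hM y₁ y₁ fun _ _ => rfl)
  have hK₀ : 0 ≤ K := (abs_nonneg _).trans (hK y₁)
  set d : ℕ → ℝ := fun j => |f (shiftBy j y₁) - f (shiftBy j y₂)|
  -- far from both ends of `[0, N)` the two orbit points agree on `[-M, M]`
  have hgood : ∀ j ∈ Finset.range N, M ≤ j ∧ j + M < N → d j ≤ ε := fun j _ hj =>
    hM _ _ fun c hc => by
      have hc' : -(M : ℤ) ≤ c ∧ c ≤ M := abs_le.mp (by rw [Int.abs_eq_natAbs]; exact_mod_cast hc)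
      have := wordAt_eq_iff.mp hy ⟨(c + j).toNat, by omega⟩
      simpa [shiftBy, Int.toNat_of_nonneg (by omega : 0 ≤ c + j)] using this
  have hbad : ∀ j, d j ≤ 2 * K := fun j => by
    linarith [abs_sub (f (shiftBy j y₁)) (f (shiftBy j y₂)), hK (shiftBy j y₁), hK (shiftBy j y₂)]
  calc |shiftSum f N y₁ - shiftSum f N y₂|
      ≤ ∑ j ∈ Finset.range N, d j := by
        rw [shiftSum, shiftSum, ← Finset.sum_sub_distrib]
        exact Finset.abs_sum_le_sum_abs _ _
    _ = ∑ j ∈ Finset.range N with M ≤ j ∧ j + M < N, d j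
          + ∑ j ∈ Finset.range N with ¬ (M ≤ j ∧ j + M < N), d j :=
        (Finset.sum_filter_add_sum_filter_not _ _ _).symm
    _ ≤ N * ε + 2 * M * (2 * K) := by
        refine add_le_add ?_ ?_
        · refine (Finset.sum_le_card_nsmul _ _ ε fun j hj => ?_).trans ?_
          · exact hgood j (Finset.mem_filter.mp hj).1 (Finset.mem_filter.mp hj).2
          · rw [nsmul_eq_mul]
            gcongr
            exact_mod_cast (Finset.card_filter_le _ _).trans (Finset.card_range N).le
        · refine (Finset.sum_le_card_nsmul _ _ (2 * K) fun j _ => hbad j).trans ?_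
          rw [nsmul_eq_mul]
          gcongr
          exact_mod_cast card_filter_not_mem_window_le M N
    _ = N * ε + 4 * M * K := by ring

lemma tendsto_shiftSum_sub_div [Finite A] [TopologicalSpace A] [DiscreteTopology A]
    {f : (ℤ → A) → ℝ} (hf : Continuous f) {n : ℕ → ℕ} (hn : Tendsto n atTop atTop)
    {y₁ y₂ : ℕ → ℤ → A} (hy : ∀ k, wordAt (y₁ k) 0 (n k) = wordAt (y₂ k) 0 (n k)) :
    Tendsto (fun k => (shiftSum f (n k) (y₁ k) - shiftSum f (n k) (y₂ k)) / n k) atTop (𝓝 0) := by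
  obtain ⟨K, hK⟩ := isCompact_univ.exists_bound_of_continuousOn hf.continuousOn
  refine tendsto_of_forall_eventually_abs_sub_le (tendsto_natCast_atTop_iff.mpr hn)
    fun ε hε => ?_
  obtain ⟨M, hM⟩ := exists_abs_sub_le_of_eqOn_window hf hε
  refine ⟨4 * M * K, ?_⟩
  filter_upwards [hn.eventually_gt_atTop 0] with k hk
  have hpos : (0 : ℝ) < n k := by exact_mod_cast hk
  rw [sub_zero, abs_div, abs_of_pos hpos, div_le_iff₀ hpos,
    show (ε + 4 * M * K / n k) * n k = n k * ε + 4 * M * K by field_simp]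
  exact abs_shiftSum_sub_le hM (fun u => hK u (Set.mem_univ u)) (hy k)

lemma GenericFor.isProbabilityMeasure [TopologicalSpace A] [MeasurableSpace A] {z : ℤ → A}
    {μ : Measure (ℤ → A)} (hz : GenericFor z μ) : IsProbabilityMeasure μ := by
  have hone : Tendsto (fun N : ℕ => (∑ _i ∈ Finset.range N, (1 : ℝ)) / N) atTop (𝓝 1) := by
    refine tendsto_const_nhds.congr' ?_
    filter_upwards [eventually_gt_atTop 0] with N hN
    rw [Finset.sum_const, Finset.card_range, nsmul_one, div_self (by positivity)]
  have := tendsto_nhds_unique (hz _ continuous_const) hone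
  rw [integral_const, smul_eq_mul, mul_one, measureReal_def, ENNReal.toReal_eq_one_iff] at this
  exact ⟨this⟩

/-- Cylinder sets are clopen, so their indicators are among the test functions. -/
lemma ext_of_forall_integral_continuous_eq [TopologicalSpace A] [DiscreteTopology A]
    [MeasurableSpace A] {μ ν : Measure (ℤ → A)} [IsFiniteMeasure μ] [IsFiniteMeasure ν]
    (h : ∀ f : (ℤ → A) → ℝ, Continuous f → ∫ y, f y ∂μ = ∫ y, f y ∂ν) : μ = ν := by
  have hcyl : ∀ s ∈ measurableCylinders fun _ : ℤ => A, μ s = ν s := by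
    intro s hs
    obtain ⟨J, S, hS, rfl⟩ := (mem_measurableCylinders _).mp hs
    have hres : Continuous (J.restrict : (ℤ → A) → J → A) :=
      continuous_pi fun i => continuous_apply (i : ℤ)
    have hclopen : IsClopen (cylinder (α := fun _ : ℤ => A) J S) :=
      ⟨(isClosed_discrete S).preimage hres, (isOpen_discrete S).preimage hres⟩
    have := h _ (LocallyConstant.charFn ℝ hclopen).continuous
    rw [LocallyConstant.coe_charFn, integral_indicator_one (hS.cylinder),
      integral_indicator_one (hS.cylinder)] at this
    exact (measureReal_eq_measureReal_iff ..).mp this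
  refine ext_of_generate_finite _ generateFrom_measurableCylinders.symm
    isPiSystem_measurableCylinders hcyl ?_
  exact (measureReal_eq_measureReal_iff ..).mp (by simpa using h (fun _ => 1) continuous_const)

lemma eq_of_tendsto_shiftSum_of_wordAt_eq [Finite A] [TopologicalSpace A] [DiscreteTopology A]
    [MeasurableSpace A] {μ₁ μ₂ : Measure (ℤ → A)} [IsFiniteMeasure μ₁] [IsFiniteMeasure μ₂]
    {n : ℕ → ℕ} (hn : Tendsto n atTop atTop) {y₁ y₂ : ℕ → ℤ → A}
    (hy : ∀ k, wordAt (y₁ k) 0 (n k) = wordAt (y₂ k) 0 (n k))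
    (h₁ : ∀ f : (ℤ → A) → ℝ, Continuous f →
      Tendsto (fun k => shiftSum f (n k) (y₁ k) / n k) atTop (𝓝 (∫ z, f z ∂μ₁)))
    (h₂ : ∀ f : (ℤ → A) → ℝ, Continuous f →
      Tendsto (fun k => shiftSum f (n k) (y₂ k) / n k) atTop (𝓝 (∫ z, f z ∂μ₂))) :
    μ₁ = μ₂ :=
  ext_of_forall_integral_continuous_eq fun f hf => sub_eq_zero.mp <|
    tendsto_nhds_unique ((h₁ f hf).sub (h₂ f hf)) (by
      simpa only [sub_div] using tendsto_shiftSum_sub_div hf hn hy)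

lemma not_injective_of_tendsto_shiftSum [Finite A] [TopologicalSpace A] [DiscreteTopology A]
    [MeasurableSpace A] {ι : Type*} [Finite ι] {μ : ι → Measure (ℤ → A)}
    [∀ t, IsFiniteMeasure (μ t)] {n : ℕ → ℕ} (hn : Tendsto n atTop atTop)
    {S : ℕ → Set (List A)} (hSfin : ∀ k, (S k).Finite) (hS : ∀ k, (S k).ncard < Nat.card ι)
    {y : ι → ℕ → ℤ → A} (hyS : ∀ t k, wordAt (y t k) 0 (n k) ∈ S k)
    (hlim : ∀ t, ∀ f : (ℤ → A) → ℝ, Continuous f →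
      Tendsto (fun k => shiftSum f (n k) (y t k) / n k) atTop (𝓝 (∫ z, f z ∂μ t))) :
    ¬ Function.Injective μ := by
  intro hinj
  have hpair : ∀ k, ∃ p : ι × ι, p.1 ≠ p.2 ∧
      wordAt (y p.1 k) 0 (n k) = wordAt (y p.2 k) 0 (n k) := fun k => by
    obtain ⟨a, -, b, -, hab, heq⟩ := Set.exists_ne_map_eq_of_ncard_lt_of_maps_to
      (s := Set.univ) (by rw [Set.ncard_univ]; exact hS k) (fun t _ => hyS t k) (hSfin k)
    exact ⟨(a, b), hab, heq⟩
  choose P hP using hpair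
  obtain ⟨p, hp⟩ := Finite.exists_infinite_fiber P
  obtain ⟨φ, hφ, hPφ⟩ := extraction_of_frequently_atTop
    (Nat.frequently_atTop_iff_infinite.mpr (Set.infinite_coe_iff.mp hp))
  have hPφ' : ∀ m, P (φ m) = p := hPφ
  have hφ' := hφ.tendsto_atTop
  have hne : p.1 ≠ p.2 := by simpa only [hPφ' 0] using (hP (φ 0)).1
  refine hne (hinj (eq_of_tendsto_shiftSum_of_wordAt_eq (hn.comp hφ') (fun m => ?_)
    (fun f hf => (hlim p.1 f hf).comp hφ') (fun f hf => (hlim p.2 f hf).comp hφ')))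
  simpa only [hPφ', Function.comp_apply] using (hP (φ m)).2

theorem exists_rightSpecial_windows [Finite A] [TopologicalSpace A] [DiscreteTopology A]
    [MeasurableSpace A] {x : ℤ → A} (hnp : ¬ EventuallyPeriodicRight x) {g : ℕ} {n : ℕ → ℕ}
    (hn : Tendsto n atTop atTop) (hn0 : ∀ k, 0 < n k)
    (hc : ∀ k, complexity (orbitClosure x) (n k) < 2 * g * n k) {z : ℤ → A}
    (hz : z ∈ orbitClosure x) {μ : Measure (ℤ → A)} (hzμ : GenericFor z μ) :
    ∃ y : ℕ → ℤ → A,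
      (∀ k, y k ∈ orbitClosure x ∧ wordAt (y k) 0 (n k) ∈ RS (orbitClosure x) (n k)) ∧
      ∀ f : (ℤ → A) → ℝ, Continuous f →
        Tendsto (fun k => shiftSum f (n k) (y k) / n k) atTop (𝓝 (∫ w, f w ∂μ)) := by
  have hpos : ∀ k, ∃ q : ℕ, q ≤ 2 * g * n k ∧ wordAt z q (n k) ∈ RS (orbitClosure x) (n k) := by
    intro k
    have hocc := occursAt_wordAt z 0 (complexity (orbitClosure x) (n k) + n k)
    obtain ⟨i, hi, hRS⟩ :=
      exists_rightSpecial_factor hnp (hn0 k) (wordIn_wordAt hz 0 _) (length_wordAt ..).ge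
    rw [drop_take_eq_wordAt hocc hi, zero_add] at hRS
    rw [length_wordAt] at hi
    exact ⟨i, by linarith [hc k], hRS⟩
  choose q hq hRS using hpos
  refine ⟨fun k => shiftBy (q k) z,
    fun k => ⟨shiftInvariant_orbitClosure x _ _ hz, by rw [wordAt_shiftBy, zero_add]; exact hRS k⟩,
    fun f hf => ?_⟩
  simpa only [shiftSum_add, add_sub_cancel_left] using
    tendsto_sub_div_of_tendsto_div (F := fun N => shiftSum f N z) (hzμ f hf) hq hn

theorem stmt18 [Fintype A] [TopologicalSpace A] [DiscreteTopology A] [MeasurableSpace A]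
    (x : ℤ → A) (X : Set (ℤ → A)) (hX : X = orbitClosure x)
    (hnp : ¬ EventuallyPeriodicRight x)
    (g C : ℕ) (n : ℕ → ℕ) (hn : StrictMono n) (hn0 : ∀ k, 0 < n k)
    (hc : ∀ k, complexity X (n k) < 2 * g * n k)
    (hC : ∀ k, (RS X (n k)).ncard = C) :
    (∀ k, ∀ w : List A, w.length = (2 * g + 1) * n k → WordIn X w →
      ∃ i : ℕ, i + n k ≤ w.length ∧ (w.drop i).take (n k) ∈ RS X (n k)) ∧
    (∀ μ : Measure (ℤ → A), GenericMeasure X μ →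
      ∃ (φ : ℕ → ℕ) (y : ℕ → (ℤ → A)), StrictMono φ ∧
        (∀ m, y m ∈ X ∧ wordAt (y m) 0 (n (φ m)) ∈ RS X (n (φ m))) ∧
        ∀ f : (ℤ → A) → ℝ, Continuous f →
          Tendsto (fun m => (∑ i ∈ Finset.range (n (φ m)), f (shiftBy i (y m))) /
              (n (φ m) : ℝ)) atTop (𝓝 (∫ z, f z ∂μ))) ∧
    (∀ μs : Fin (C + 1) → Measure (ℤ → A),
      (∀ t, GenericMeasure X (μs t)) → ¬ Function.Injective μs) := by
  subst hX
  have hn' : Tendsto n atTop atTop := hn.tendsto_atTop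
  refine ⟨fun k w hlen hw => exists_rightSpecial_factor hnp (hn0 k) hw
    (by rw [hlen]; linarith [hc k]), fun μ ⟨z, hz, hzμ⟩ => ?_, fun μs hμs => ?_⟩
  · obtain ⟨y, hy, hlim⟩ := exists_rightSpecial_windows hnp hn' hn0 hc hz hzμ
    exact ⟨id, y, strictMono_id, hy, hlim⟩
  · choose z hz hzμ using hμs
    have := fun t => (hzμ t).isProbabilityMeasure
    choose y hy hlim using fun t => exists_rightSpecial_windows hnp hn' hn0 hc (hz t) (hzμ t)
    exact not_injective_of_tendsto_shiftSum hn'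
      (fun k => (List.finite_length_eq A (n k)).subset fun _ hw => hw.1)
      (fun k => by rw [hC k, Nat.card_eq_fintype_card, Fintype.card_fin]; omega)
      (fun t k => (hy t k).2) hlim
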